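/- arXiv:0712.3671 — 5 statements merged into one kernel-verified Lean document; each statement's English description precedes it below -/
import Mathlib

section
/- Let $A$ be a real $n\times n$ matrix with compartmental structure, i.e. $A_{ii} \ge 0$ for all $i$, $A_{ij} \le 0$ for all $i \ne j$, and $\sum_{i} A_{ij} \ge 0$ for every column $j$. Then for every $\lambda > 0$ the matrix $\lambda I + A$ is invertible, all entries of $(\lambda I + A)^{-1}$ are nonnegative, and every column sum of $(\lambda I + A)^{-1}$ is at most $1/\lambda$, i.e. $\sum_i ((\lambda I + A)^{-1})_{ij} \le 1/\lambda$ for all $j$. -/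
open Matrix BigOperators

-- key lemma: row-dominance style nonneg solution
lemma aux_nonneg {n : ℕ} (N : Matrix (Fin n) (Fin n) ℝ)
    (hoff : ∀ i j, i ≠ j → N i j ≤ 0)
    (hrow : ∀ i, 0 < ∑ j, N i j)
    (x b : Fin n → ℝ) (hb : ∀ i, 0 ≤ b i)
    (hx : N.mulVec x = b) : ∀ i, 0 ≤ x i := by
  by_contra h
  push_neg at h
  obtain ⟨i0, hi0⟩ := h
  have hne : (Finset.univ : Finset (Fin n)).Nonempty := ⟨i0, Finset.mem_univ _⟩
  obtain ⟨k, -, hk⟩ := Finset.exists_min_image Finset.univ x hne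
  have hxk : x k < 0 := lt_of_le_of_lt (hk i0 (Finset.mem_univ _)) hi0
  have hbk : b k = ∑ j, N k j * x j := by
    rw [← hx]; rfl
  have hle : ∑ j, N k j * x j ≤ (∑ j, N k j) * x k := by
    rw [Finset.sum_mul]
    refine Finset.sum_le_sum fun j _ => ?_
    by_cases hj : j = k
    · subst hj; exact le_rfl
    · nlinarith [hoff k j (Ne.symm hj), hk j (Finset.mem_univ j)]
  have hlt : b k < 0 := by
    rw [hbk]
    exact lt_of_le_of_lt hle (mul_neg_of_pos_of_neg (hrow k) hxk)
  linarith [hb k]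

/-- A real `n × n` matrix with compartmental structure (nonnegative
diagonal, nonpositive off-diagonal, nonnegative column sums): for every `lam > 0`
the matrix `lam • 1 + A` is invertible, its inverse has nonnegative entries and
all column sums of the inverse are at most `1 / lam`. -/
theorem stmt0 {n : ℕ} (A : Matrix (Fin n) (Fin n) ℝ)
    (hdiag : ∀ i, 0 ≤ A i i)
    (hoff : ∀ i j, i ≠ j → A i j ≤ 0)
    (hcol : ∀ j, 0 ≤ ∑ i, A i j)
    (lam : ℝ) (hlam : 0 < lam) :
    IsUnit (lam • (1 : Matrix (Fin n) (Fin n) ℝ) + A) ∧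
    (∀ i j, 0 ≤ (lam • (1 : Matrix (Fin n) (Fin n) ℝ) + A)⁻¹ i j) ∧
    (∀ j, ∑ i, (lam • (1 : Matrix (Fin n) (Fin n) ℝ) + A)⁻¹ i j ≤ 1 / lam) := by
  set M : Matrix (Fin n) (Fin n) ℝ := lam • (1 : Matrix (Fin n) (Fin n) ℝ) + A with hM
  have hMdiag : ∀ i, M i i = lam + A i i := by
    intro i; simp [hM, Matrix.one_apply]
  have hMoff : ∀ i j, i ≠ j → M i j = A i j := by
    intro i j hij; simp [hM, Matrix.one_apply, hij]
  have hMoffle : ∀ i j, i ≠ j → M i j ≤ 0 := fun i j hij => (hMoff i j hij) ▸ hoff i j hij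
  have hMcol : ∀ j, lam ≤ ∑ i, M i j := by
    intro j
    have : ∑ i, M i j = lam + ∑ i, A i j := by
      simp [hM, Finset.sum_add_distrib, Matrix.one_apply]
    rw [this]; linarith [hcol j]
  have hdet : M.det ≠ 0 := by
    apply det_ne_zero_of_sum_col_lt_diag
    intro k
    have h1 : ∑ i ∈ Finset.univ.erase k, ‖M i k‖ = ∑ i ∈ Finset.univ.erase k, (-(M i k)) := by
      refine Finset.sum_congr rfl fun i hi => ?_
      have : M i k ≤ 0 := hMoffle i k (Finset.ne_of_mem_erase hi)
      rw [Real.norm_eq_abs, abs_of_nonpos this]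
    have h2 : ∑ i ∈ Finset.univ.erase k, M i k = (∑ i, M i k) - M k k := by
      rw [← Finset.sum_erase_add Finset.univ _ (Finset.mem_univ k)]; ring
    have hMkk : 0 < M k k := by rw [hMdiag]; linarith [hdiag k]
    rw [h1, Finset.sum_neg_distrib, h2, Real.norm_eq_abs, abs_of_pos hMkk]
    have := hMcol k
    linarith
  have hUnit : IsUnit M := by
    rw [Matrix.isUnit_iff_isUnit_det]; exact hdet.isUnit
  have hTdet : Mᵀ.det ≠ 0 := by rwa [Matrix.det_transpose]
  -- nonnegativity of the inverse
  have hinv : ∀ i j, 0 ≤ M⁻¹ i j := by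
    intro i j
    have hMT : Mᵀ * Mᵀ⁻¹ = 1 := Matrix.mul_nonsing_inv _ (Ne.isUnit hTdet)
    have hmv : Mᵀ.mulVec (fun k => Mᵀ⁻¹ k i) = fun r => (1 : Matrix (Fin n) (Fin n) ℝ) r i := by
      funext r
      have := congrFun (congrFun hMT r) i
      simpa [Matrix.mulVec, Matrix.mul_apply, dotProduct] using this
    have hrow : ∀ r, 0 < ∑ c, Mᵀ r c := by
      intro r; simpa [Matrix.transpose_apply] using lt_of_lt_of_le hlam (hMcol r)
    have := aux_nonneg Mᵀ (fun a b hab => hMoffle b a hab.symm) hrow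
      (fun k => Mᵀ⁻¹ k i) (fun r => (1 : Matrix (Fin n) (Fin n) ℝ) r i)
      (fun r => by by_cases h : r = i <;> simp [Matrix.one_apply, h]) hmv j
    rwa [← Matrix.transpose_nonsing_inv, Matrix.transpose_apply] at this
  refine ⟨hUnit, hinv, ?_⟩
  intro j
  have hMI : M * M⁻¹ = 1 := Matrix.mul_nonsing_inv _ (Ne.isUnit hdet)
  have hsum : ∑ i, ∑ k, M i k * M⁻¹ k j = 1 := by
    have : ∀ i, ∑ k, M i k * M⁻¹ k j = (1 : Matrix (Fin n) (Fin n) ℝ) i j := by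
      intro i; have := congrFun (congrFun hMI i) j
      simpa [Matrix.mul_apply] using this
    simp_rw [this]
    simp [Matrix.one_apply]
  rw [Finset.sum_comm] at hsum
  have hge : lam * ∑ k, M⁻¹ k j ≤ 1 := by
    rw [← hsum, Finset.mul_sum]
    refine Finset.sum_le_sum fun k _ => ?_
    rw [← Finset.sum_mul]
    exact mul_le_mul_of_nonneg_right (hMcol k) (hinv k j)
  rw [le_div_iff₀ hlam, mul_comm]
  exact hge
end

section
/- Let $A$ be a real $n\times n$ matrix with positive diagonal entries, nonpositive off-diagonal entries, and strictly positive column sums, i.e. $A_{jj} > \sum_{i \ne j} |A_{ij}|$ for every $j$. Let $K$ be the diagonal part of $A$ and $Q = K - A$, so that all entries of $Q$ are nonnegative. Then $A$ is invertible, the series $\sum_{k=0}^{\infty} (K^{-1} Q)^k K^{-1}$ converges, its sum equals $A^{-1}$, and all entries of $A^{-1}$ are nonnegative. -/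
/-!
Write `M = Q K⁻¹`. Strict column dominance says that every column of `|M|` sums to less than `1`,
i.e. `Mᵀ` has ℓ∞ operator norm `< 1`, so the Neumann series `∑ Mᵏ` converges and inverts `1 - M`.
Since `A = (1 - M) K` and `(K⁻¹ Q)ᵏ K⁻¹ = K⁻¹ Mᵏ`, the Jacobi series is `K⁻¹ ∑ Mᵏ = A⁻¹`; its terms
are entrywise nonnegative because `K⁻¹` and `M` are.
-/

open Matrix

namespace Matrix

theorem tsum_apply_nonneg {X m n : Type*} {f : X → Matrix m n ℝ} (hf : ∀ x i j, 0 ≤ f x i j)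
    (i : m) (j : n) : 0 ≤ (∑' x, f x) i j := by
  by_cases hs : Summable f
  · exact (Pi.hasSum.mp (Pi.hasSum.mp hs.hasSum i) j).nonneg fun x => hf x i j
  · simp [tsum_eq_zero_of_not_summable hs]

variable {ι : Type*} [DecidableEq ι] {A : Matrix ι ι ℝ}

theorem diagonal_sub_apply_nonneg (hoff : ∀ i j, i ≠ j → A i j ≤ 0) (i j : ι) :
    0 ≤ ((diagonal fun i => A i i) - A) i j := by
  rcases eq_or_ne i j with rfl | hij
  · simp
  · simpa [diagonal_apply_ne _ hij] using hoff i j hij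

variable [Fintype ι]

theorem summable_pow_of_sum_abs_col_lt_one {M : Matrix ι ι ℝ} (hM : ∀ j, ∑ i, |M i j| < 1) :
    Summable (M ^ ·) := by
  let _ := Matrix.linftyOpNormedRing (n := ι) (α := ℝ)
  -- the norm's uniform structure is the product one, but only up to unfolding
  have : @CompleteSpace (Matrix ι ι ℝ) PseudoMetricSpace.toUniformSpace :=
    Matrix.instCompleteSpace ι ι ℝ
  have hnorm : ‖Mᵀ‖₊ < 1 := by
    rw [linfty_opNNNorm_def, Finset.sup_lt_iff zero_lt_one]
    intro j _
    rw [← NNReal.coe_lt_coe]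
    simpa using hM j
  have : Summable (Mᵀ ^ ·) := summable_geometric_of_norm_lt_one hnorm
  simpa [← transpose_pow] using this.matrix_transpose

theorem diagonal_inv_mul_diagonal {d : ι → ℝ} (hd : ∀ i, d i ≠ 0) :
    diagonal (fun i => (d i)⁻¹) * diagonal d = 1 := by
  rw [diagonal_mul_diagonal, ← diagonal_one]
  exact congrArg diagonal (funext fun i => inv_mul_cancel₀ (hd i))

theorem inv_diagonal_of_ne_zero {d : ι → ℝ} (hd : ∀ i, d i ≠ 0) :
    (diagonal d)⁻¹ = diagonal fun i => (d i)⁻¹ :=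
  inv_eq_left_inv (diagonal_inv_mul_diagonal hd)

theorem diag_pos_of_sum_abs_erase_lt (hdom : ∀ j, ∑ i ∈ Finset.univ.erase j, |A i j| < A j j)
    (j : ι) : 0 < A j j :=
  (Finset.sum_nonneg fun i _ => abs_nonneg (A i j)).trans_lt (hdom j)

theorem sum_abs_diagonal_sub_apply (j : ι) :
    ∑ i, |((diagonal fun i => A i i) - A) i j| = ∑ i ∈ Finset.univ.erase j, |A i j| := by
  rw [← Finset.add_sum_erase _ _ (Finset.mem_univ j), sub_apply, diagonal_apply_eq, sub_self,
    abs_zero, zero_add]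
  refine Finset.sum_congr rfl fun i hi => ?_
  rw [sub_apply, diagonal_apply_ne _ (Finset.ne_of_mem_erase hi), zero_sub, abs_neg]

theorem sum_abs_diagonal_sub_mul_inv_lt_one
    (hdom : ∀ j, ∑ i ∈ Finset.univ.erase j, |A i j| < A j j) (j : ι) :
    ∑ i, |((diagonal fun i => A i i) - A) i j * (A j j)⁻¹| < 1 := by
  have hpos := diag_pos_of_sum_abs_erase_lt hdom j
  calc ∑ i, |((diagonal fun i => A i i) - A) i j * (A j j)⁻¹|
      = (∑ i ∈ Finset.univ.erase j, |A i j|) / A j j := by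
        simp only [abs_mul, abs_inv, abs_of_pos hpos, ← Finset.sum_mul, sum_abs_diagonal_sub_apply,
          div_eq_mul_inv]
    _ < 1 := (div_lt_one hpos).2 (hdom j)

end Matrix

theorem stmt3_general {n : ℕ} (A : Matrix (Fin n) (Fin n) ℝ)
    (hoff : ∀ i j, i ≠ j → A i j ≤ 0)
    (hdom : ∀ j, ∑ i ∈ Finset.univ.erase j, |A i j| < A j j)
    (K Q : Matrix (Fin n) (Fin n) ℝ)
    (hK : K = Matrix.diagonal fun i => A i i)
    (hQdef : Q = K - A) :
    IsUnit A ∧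
    Summable (fun k : ℕ => (K⁻¹ * Q) ^ k * K⁻¹) ∧
    (∑' k : ℕ, (K⁻¹ * Q) ^ k * K⁻¹) = A⁻¹ ∧
    (∀ i j, 0 ≤ A⁻¹ i j) := by
  have hpos : ∀ i, 0 < A i i := diag_pos_of_sum_abs_erase_lt hdom
  have hKinv : K⁻¹ = diagonal fun i => (A i i)⁻¹ :=
    hK ▸ inv_diagonal_of_ne_zero fun i => (hpos i).ne'
  have hKK : K⁻¹ * K = 1 := hKinv ▸ hK ▸ diagonal_inv_mul_diagonal fun i => (hpos i).ne'
  have hQ : ∀ i j, 0 ≤ Q i j := by subst hQdef hK; exact diagonal_sub_apply_nonneg hoff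
  have hcol : ∀ j, ∑ i, |Q i j * (A j j)⁻¹| < 1 := by
    subst hQdef hK; exact sum_abs_diagonal_sub_mul_inv_lt_one hdom
  set M := Q * K⁻¹ with hMdef
  have hM : ∀ i j, M i j = Q i j * (A j j)⁻¹ := by simp [hMdef, hKinv, mul_diagonal]
  have hMnonneg : ∀ i j, 0 ≤ M i j := fun i j => by
    rw [hM]; exact mul_nonneg (hQ i j) (inv_nonneg.2 (hpos j).le)
  have hsum : Summable (M ^ ·) :=
    summable_pow_of_sum_abs_col_lt_one fun j => by simpa only [hM] using hcol j
  have hterms : (fun k : ℕ => (K⁻¹ * Q) ^ k * K⁻¹) = fun k => K⁻¹ * M ^ k :=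
    funext fun k => mul_pow_mul _ _ k
  have hright : A * ∑' k : ℕ, (K⁻¹ * Q) ^ k * K⁻¹ = 1 := by
    have hA : A = (1 - M) * K := by
      rw [sub_mul, one_mul, mul_assoc, hKK, mul_one, hQdef, sub_sub_cancel]
    rw [hterms, hsum.tsum_mul_left, hA, mul_assoc, ← mul_assoc K, mul_eq_one_comm.mp hKK, one_mul,
      hsum.one_sub_mul_tsum_pow]
  have hinv : A⁻¹ = ∑' k : ℕ, (K⁻¹ * Q) ^ k * K⁻¹ := inv_eq_right_inv hright
  refine ⟨.of_mul_eq_one _ hright, hterms ▸ hsum.mul_left K⁻¹, hinv.symm, fun i j => ?_⟩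
  rw [hinv, hterms]
  refine tsum_apply_nonneg (fun k i j => ?_) i j
  rw [hKinv, diagonal_mul]
  exact mul_nonneg (inv_nonneg.2 (hpos i).le) (pow_apply_nonneg hMnonneg k i j)

/-- A strictly column diagonally dominant matrix with positive
diagonal and nonpositive off-diagonal entries is invertible; with `K` its
diagonal part and `Q = K - A`, the Jacobi series `∑ (K⁻¹ Q)ᵏ K⁻¹` converges to
`A⁻¹`, and `A⁻¹` has nonnegative entries. -/
theorem stmt3 {n : ℕ} (A : Matrix (Fin n) (Fin n) ℝ)
    (hdiag : ∀ i, 0 < A i i)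
    (hoff : ∀ i j, i ≠ j → A i j ≤ 0)
    (hdom : ∀ j, ∑ i ∈ Finset.univ.erase j, |A i j| < A j j)
    (K Q : Matrix (Fin n) (Fin n) ℝ)
    (hK : K = Matrix.diagonal fun i => A i i)
    (hQdef : Q = K - A) :
    IsUnit A ∧
    Summable (fun k : ℕ => (K⁻¹ * Q) ^ k * K⁻¹) ∧
    (∑' k : ℕ, (K⁻¹ * Q) ^ k * K⁻¹) = A⁻¹ ∧
    (∀ i j, 0 ≤ A⁻¹ i j) :=
  stmt3_general A hoff hdom K Q hK hQdef
end

section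
/- Let $a$ be a real symmetric $d \times d$ matrix and let $\hat a$ be its comparison matrix, defined by $\hat a_{ii} = a_{ii}$ and $\hat a_{ij} = -|a_{ij}|$ for $i \ne j$. Then $\hat a$ is positive definite if and only if there exist positive integers $r_1, \dots, r_d$ such that for every $i$, $\sum_{m \ne i} \frac{r_i}{r_m} |a_{mi}| < a_{ii}$. -/
/-!
Put `x m = 1 / r m`: the row conditions say exactly that `â *ᵥ x > 0` for a positive vector `x`,
and for a symmetric matrix with nonpositive off-diagonal entries (a Z-matrix) such an `x` exists
iff the matrix is positive definite. If `â *ᵥ x > 0`, the weighted AM-GM inequality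
`2 |v i v j| ≤ (x j / x i) v i ^ 2 + (x i / x j) v j ^ 2` gives
`v ⬝ᵥ â *ᵥ v ≥ ∑ i, (â *ᵥ x) i / x i * v i ^ 2 > 0`. Conversely a positive definite Z-matrix is
inverse-monotone (test the quadratic form on the negative part of a solution), so `x = â⁻¹ *ᵥ 1`
is positive, and since `â *ᵥ x > 0` is open and scale invariant, `x` may be replaced by the
reciprocals of the integers `⌈t / x m⌉₊` for `t` large.
-/

open Matrix BigOperators Filter Topology Finset

namespace Matrix

variable {ι : Type*} [Fintype ι]

theorem PosDef.nonneg_of_mulVec_nonneg {A : Matrix ι ι ℝ} (hA : A.PosDef)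
    (hZ : ∀ i j, i ≠ j → A i j ≤ 0) {x : ι → ℝ} (hx : 0 ≤ A *ᵥ x) : 0 ≤ x := by
  have hcross : x⁻ ⬝ᵥ (A *ᵥ x⁺) ≤ 0 := by
    simp only [dotProduct, mulVec, Finset.mul_sum]
    refine sum_nonpos fun i _ => sum_nonpos fun j _ => ?_
    obtain rfl | hij := eq_or_ne i j
    · rcases le_total (x i) 0 with h | h <;> simp [h]
    · exact mul_nonpos_of_nonneg_of_nonpos (negPart_nonneg _)
        (mul_nonpos_of_nonpos_of_nonneg (hZ i j hij) (posPart_nonneg _))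
  have hneg : x⁻ ⬝ᵥ (A *ᵥ x⁻) ≤ 0 := by
    have : x⁻ ⬝ᵥ (A *ᵥ x⁻) = x⁻ ⬝ᵥ (A *ᵥ x⁺) - x⁻ ⬝ᵥ (A *ᵥ x) := by
      rw [← dotProduct_sub, ← mulVec_sub, sub_eq_iff_eq_add'.2 (eq_add_of_sub_eq
        (posPart_sub_negPart x))]
    linarith [dotProduct_nonneg_of_nonneg (negPart_nonneg x) hx]
  have hzero : x⁻ = 0 := by
    by_contra h
    have := hA.dotProduct_mulVec_pos h
    rw [star_trivial] at this
    linarith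
  rw [← posPart_sub_negPart x, hzero, sub_zero]
  exact posPart_nonneg x

theorem PosDef.exists_pos_mulVec_pos {A : Matrix ι ι ℝ} (hA : A.PosDef)
    (hZ : ∀ i j, i ≠ j → A i j ≤ 0) : ∃ x : ι → ℝ, (∀ i, 0 < x i) ∧ ∀ i, 0 < (A *ᵥ x) i := by
  classical
  set x := A⁻¹ *ᵥ 1
  have hAx : A *ᵥ x = 1 := by
    rw [mulVec_mulVec, mul_nonsing_inv _ ((isUnit_iff_isUnit_det A).1 hA.isUnit), one_mulVec]
  have hx : 0 ≤ x := hA.nonneg_of_mulVec_nonneg hZ (hAx ▸ zero_le_one)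
  refine ⟨x, fun i => (hx i).lt_of_ne' fun h => ?_, by simp [hAx]⟩
  have hrow : A i i * x i + ∑ j ∈ univ.erase i, A i j * x j = 1 := by
    rw [add_sum_erase univ (fun j => A i j * x j) (mem_univ i)]
    exact congrFun hAx i
  have hoff : ∑ j ∈ univ.erase i, A i j * x j ≤ 0 := sum_nonpos fun j hj =>
    mul_nonpos_of_nonpos_of_nonneg (hZ i j (ne_of_mem_erase hj).symm) (hx j)
  rw [h, Pi.zero_apply, mul_zero, zero_add] at hrow
  linarith

theorem sum_div_mul_sq_le_dotProduct_mulVec {A : Matrix ι ι ℝ} (hA : A.IsHermitian)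
    (hZ : ∀ i j, i ≠ j → A i j ≤ 0) {x : ι → ℝ} (hx : ∀ i, 0 < x i) (v : ι → ℝ) :
    ∑ i, (A *ᵥ x) i / x i * v i ^ 2 ≤ v ⬝ᵥ (A *ᵥ v) := by
  have hterm : ∀ i j,
      A i j * (x j / x i * v i ^ 2 + x i / x j * v j ^ 2) / 2 ≤ v i * (A i j * v j) := by
    intro i j
    have hxi := hx i
    have hxj := hx j
    have key : v i * (A i j * v j) - A i j * (x j / x i * v i ^ 2 + x i / x j * v j ^ 2) / 2
        = -A i j * (x j * v i - x i * v j) ^ 2 / (2 * x i * x j) := by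
      field_simp
      ring
    obtain rfl | hij := eq_or_ne i j
    · rw [← sub_nonneg, key]
      simp
    · rw [← sub_nonneg, key]
      exact div_nonneg (mul_nonneg (neg_nonneg.2 (hZ i j hij)) (sq_nonneg _)) (by positivity)
  have hswap : ∑ i, ∑ j, A i j * (x i / x j * v j ^ 2)
      = ∑ i, ∑ j, A i j * (x j / x i * v i ^ 2) := by
    rw [Finset.sum_comm]
    refine sum_congr rfl fun i _ => sum_congr rfl fun j _ => ?_
    rw [← hA.apply i j, star_trivial]
  calc ∑ i, (A *ᵥ x) i / x i * v i ^ 2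
      = ∑ i, ∑ j, A i j * (x j / x i * v i ^ 2) := by
        simp only [mulVec, dotProduct, sum_div, sum_mul]
        ring_nf
    _ = ∑ i, ∑ j, A i j * (x j / x i * v i ^ 2 + x i / x j * v j ^ 2) / 2 := by
        simp only [mul_add, add_div, sum_add_distrib, ← sum_div, hswap]
        ring
    _ ≤ ∑ i, ∑ j, v i * (A i j * v j) := sum_le_sum fun i _ => sum_le_sum fun j _ => hterm i j
    _ = v ⬝ᵥ (A *ᵥ v) := by simp only [dotProduct, mulVec, mul_sum]

theorem posDef_of_mulVec_pos {A : Matrix ι ι ℝ} (hA : A.IsHermitian)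
    (hZ : ∀ i j, i ≠ j → A i j ≤ 0) {x : ι → ℝ} (hx : ∀ i, 0 < x i)
    (hAx : ∀ i, 0 < (A *ᵥ x) i) : A.PosDef := by
  refine posDef_iff_dotProduct_mulVec.2 ⟨hA, fun v hv => ?_⟩
  obtain ⟨i, hi⟩ := Function.ne_iff.mp hv
  rw [star_trivial]
  refine lt_of_lt_of_le ?_ (sum_div_mul_sq_le_dotProduct_mulVec hA hZ hx v)
  have hvi : v i ≠ 0 := hi
  exact sum_pos' (fun j _ => by have := hAx j; have := hx j; positivity)
    ⟨i, mem_univ i, by have := hAx i; have := hx i; positivity⟩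

theorem exists_nat_pos_mulVec_inv_pos (A : Matrix ι ι ℝ) {x : ι → ℝ} (hx : ∀ i, 0 < x i)
    (hAx : ∀ i, 0 < (A *ᵥ x) i) :
    ∃ r : ι → ℕ, (∀ i, 0 < r i) ∧ ∀ i, 0 < (A *ᵥ fun m => ((r m : ℝ))⁻¹) i := by
  -- With `r m = ⌈(x m)⁻¹ * t⌉₊`, `t / r m → x m` as `t → ∞`.
  have hy : Tendsto (fun t : ℝ => fun m => t / ⌈(x m)⁻¹ * t⌉₊) atTop (𝓝 x) := by
    refine tendsto_pi_nhds.2 fun m => ?_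
    simpa using (tendsto_nat_ceil_mul_div_atTop (inv_nonneg.2 (hx m).le)).inv₀
      (inv_ne_zero (hx m).ne')
  have hAy := (((continuous_const (y := A)).matrix_mulVec continuous_id).tendsto x).comp hy
  obtain ⟨t, ht, hpos⟩ := ((eventually_gt_atTop 0).and (eventually_all.2 fun i =>
    (tendsto_pi_nhds.1 hAy i).eventually (lt_mem_nhds (hAx i)))).exists
  refine ⟨fun m => ⌈(x m)⁻¹ * t⌉₊, fun m => Nat.ceil_pos.2 (by have := hx m; positivity),
    fun i => ?_⟩
  have hscale : (fun m => t / ⌈(x m)⁻¹ * t⌉₊)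
      = t • fun m => ((⌈(x m)⁻¹ * t⌉₊ : ℕ) : ℝ)⁻¹ := by
    ext m
    simp [div_eq_mul_inv]
  have := hpos i
  rw [Function.comp_apply, id, hscale, mulVec_smul, Pi.smul_apply, smul_eq_mul] at this
  exact pos_of_mul_pos_right this ht.le

end Matrix

section Comparison

variable {ι : Type*} [DecidableEq ι] {a : Matrix ι ι ℝ}

def comparisonMatrix (a : Matrix ι ι ℝ) : Matrix ι ι ℝ :=
  fun i j => if i = j then a i j else -|a i j|

theorem comparisonMatrix_apply_nonpos (a : Matrix ι ι ℝ) {i j : ι} (hij : i ≠ j) :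
    comparisonMatrix a i j ≤ 0 := by
  simp [comparisonMatrix, hij]

theorem comparisonMatrix_isHermitian (ha : a.IsSymm) : (comparisonMatrix a).IsHermitian := by
  ext i j
  by_cases hij : i = j
  · subst hij; simp [comparisonMatrix]
  · simp [comparisonMatrix, hij, Ne.symm hij, ha.apply i j]

theorem comparisonMatrix_mulVec_inv_pos_iff [Fintype ι] (ha : a.IsSymm) {r : ι → ℕ}
    (hr : ∀ i, 0 < r i) (i : ι) : 0 < (comparisonMatrix a *ᵥ fun m => ((r m : ℝ))⁻¹) i ↔
      ∑ m ∈ univ.erase i, ((r i : ℝ) / r m) * |a m i| < a i i := by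
  have hri : (0 : ℝ) < r i := by exact_mod_cast hr i
  have hrow : (r i : ℝ) * (comparisonMatrix a *ᵥ fun m => ((r m : ℝ))⁻¹) i
      = a i i - ∑ m ∈ univ.erase i, ((r i : ℝ) / r m) * |a m i| := by
    rw [mulVec, dotProduct, ← add_sum_erase univ _ (mem_univ i), mul_add, mul_sum,
      sub_eq_add_neg, ← sum_neg_distrib]
    congr 1
    · rw [comparisonMatrix, if_pos rfl]
      field_simp
    · refine sum_congr rfl fun m hm => ?_
      simp only [comparisonMatrix, (ne_of_mem_erase hm).symm, ↓reduceIte, ha.apply m i, neg_mul,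
        mul_neg, neg_inj]
      field_simp
  rw [← mul_pos_iff_of_pos_left hri, hrow, sub_pos]

end Comparison

/-- For a real symmetric `d × d` matrix `a` with comparison matrix
`â` (`â_ii = a_ii`, `â_ij = -|a_ij|` for `i ≠ j`), `â` is positive definite iff
there exist positive integers `r₁, …, r_d` with
`∑_{m ≠ i} (rᵢ/r_m)|a_mi| < a_ii` for every `i`. -/
theorem stmt7 (d : ℕ) (a : Matrix (Fin d) (Fin d) ℝ) (hsymm : a.IsSymm)
    (ahat : Matrix (Fin d) (Fin d) ℝ)
    (hhat : ∀ i j, ahat i j = if i = j then a i j else -|a i j|) :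
    ahat.PosDef ↔
      ∃ r : Fin d → ℕ, (∀ i, 0 < r i) ∧
        ∀ i, ∑ m ∈ Finset.univ.erase i, ((r i : ℝ) / (r m : ℝ)) * |a m i| < a i i := by
  obtain rfl : ahat = comparisonMatrix a := Matrix.ext hhat
  have hZ : ∀ i j, i ≠ j → comparisonMatrix a i j ≤ 0 :=
    fun _ _ => comparisonMatrix_apply_nonpos a
  constructor
  · intro hpd
    obtain ⟨x, hx, hAx⟩ := hpd.exists_pos_mulVec_pos hZ
    obtain ⟨r, hr, hAr⟩ := exists_nat_pos_mulVec_inv_pos _ hx hAx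
    exact ⟨r, hr, fun i => (comparisonMatrix_mulVec_inv_pos_iff hsymm hr i).1 (hAr i)⟩
  · rintro ⟨r, hr, hdom⟩
    exact posDef_of_mulVec_pos (comparisonMatrix_isHermitian hsymm) hZ
      (fun m => by have := hr m; positivity)
      fun i => (comparisonMatrix_mulVec_inv_pos_iff hsymm hr i).2 (hdom i)
end

section
/- Let $d \ge 1$ and $N \ge 1$ be integers and let $u : \mathbb{Z}^d \to \mathbb{R}$ satisfy $u_k = 0$ whenever some coordinate $k_i$ of $k$ lies outside $\{1, \dots, N-1\}$ (i.e. $u$ vanishes outside the interior grid-knots of the cube $[0,N]^d$). Then the discrete Poincaré inequality holds: $\sum_{k \in \mathbb{Z}^d} u_k^2 \le N^2 \sum_{i=1}^d \sum_{k \in \mathbb{Z}^d} (u_{k+e_i} - u_k)^2$, where $e_i$ is the $i$-th standard basis vector of $\mathbb{Z}^d$. -/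
open BigOperators Finset

lemma update_add_single' {d : ℕ} (k : Fin d → ℤ) (i : Fin d) (t : ℤ) :
    Function.update k i t + Pi.single i 1 = Function.update k i (t + 1) := by
  funext l
  by_cases h : l = i
  · subst h; simp
  · simp [Function.update_of_ne h, Pi.single_eq_of_ne h]

/-- Discrete Poincaré inequality on the grid `ℤ^d`: if `u`
vanishes at every grid-knot having some coordinate outside `{1, …, N-1}`, then
`∑_k u_k² ≤ N² ∑_i ∑_k (u_{k+eᵢ} - u_k)²`. -/
theorem stmt10 (d N : ℕ) (hd : 1 ≤ d) (hN : 1 ≤ N)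
    (u : (Fin d → ℤ) → ℝ)
    (hbd : ∀ k : Fin d → ℤ, (∃ i, k i < 1 ∨ (N : ℤ) - 1 < k i) → u k = 0) :
    ∑ᶠ k : Fin d → ℤ, (u k) ^ 2
      ≤ (N : ℝ) ^ 2 * ∑ i : Fin d, ∑ᶠ k : Fin d → ℤ,
          (u (k + Pi.single i 1) - u k) ^ 2 := by
  classical
  set i0 : Fin d := ⟨0, hd⟩ with hi0
  set Bint : Finset (Fin d → ℤ) := Fintype.piFinset (fun _ => Finset.Icc 1 ((N:ℤ)-1)) with hB
  set D : Finset (Fin d → ℤ) :=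
    Fintype.piFinset (fun j => if j = i0 then Finset.Icc 0 ((N:ℤ)-1)
      else Finset.Icc 1 ((N:ℤ)-1)) with hDdef
  have hsupp : ∀ k : Fin d → ℤ, u k ≠ 0 → ∀ i, 1 ≤ k i ∧ k i ≤ (N:ℤ) - 1 := by
    intro k hk
    have h := mt (hbd k) hk
    push_neg at h
    exact h
  -- LHS as finite sum
  have hL : ∑ᶠ k : Fin d → ℤ, (u k) ^ 2 = ∑ k ∈ Bint, (u k) ^ 2 := by
    apply finsum_eq_finset_sum_of_support_subset
    intro k hk
    have hk' : u k ≠ 0 := fun h => by simpa [Function.mem_support, h] using hk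
    rw [Finset.mem_coe, hB, Fintype.mem_piFinset]
    intro j
    rw [Finset.mem_Icc]
    exact hsupp k hk' j
  -- RHS term i0 as finite sum
  have hR : ∑ᶠ k : Fin d → ℤ, (u (k + Pi.single i0 1) - u k) ^ 2
      = ∑ k ∈ D, (u (k + Pi.single i0 1) - u k) ^ 2 := by
    apply finsum_eq_finset_sum_of_support_subset
    intro k hk
    have h2 : u (k + Pi.single i0 1) ≠ 0 ∨ u k ≠ 0 := by
      by_contra h
      push_neg at h
      apply hk
      simp [Function.mem_support, h.1, h.2]
    rw [Finset.mem_coe, hDdef, Fintype.mem_piFinset]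
    intro j
    by_cases hj : j = i0
    · subst hj
      rw [if_pos rfl, Finset.mem_Icc]
      rcases h2 with h1 | h1
      · have h := (hsupp _ h1 i0)
        simp only [Pi.add_apply, Pi.single_eq_same] at h
        omega
      · have h := hsupp _ h1 i0
        omega
    · rw [if_neg hj, Finset.mem_Icc]
      rcases h2 with h1 | h1
      · have h := (hsupp _ h1 j)
        simp only [Pi.add_apply, Pi.single_eq_of_ne hj, add_zero] at h
        exact h
      · exact hsupp _ h1 j
  -- reduce to the single direction i0
  have hterm : ∀ i : Fin d, 0 ≤ ∑ᶠ k : Fin d → ℤ, (u (k + Pi.single i 1) - u k) ^ 2 :=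
    fun i => finsum_nonneg (fun k => sq_nonneg _)
  have houter : ∑ᶠ k : Fin d → ℤ, (u (k + Pi.single i0 1) - u k) ^ 2
      ≤ ∑ i : Fin d, ∑ᶠ k : Fin d → ℤ, (u (k + Pi.single i 1) - u k) ^ 2 :=
    Finset.single_le_sum (fun i _ => hterm i) (Finset.mem_univ i0)
  rw [hL]
  refine le_trans ?_ (mul_le_mul_of_nonneg_left houter (by positivity))
  rw [hR]
  -- core inequality
  -- pointwise bound
  have point : ∀ k ∈ Bint, u k ^ 2 ≤ ((N:ℝ) - 1) * ∑ j ∈ Finset.range N,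
      (u (Function.update k i0 ((j:ℤ) + 1)) - u (Function.update k i0 (j:ℤ))) ^ 2 := by
    intro k hk
    rw [hB, Fintype.mem_piFinset] at hk
    simp only [Finset.mem_Icc] at hk
    set m := (k i0).toNat with hm
    have hk0 := hk i0
    have hmc : (m : ℤ) = k i0 := Int.toNat_of_nonneg (by omega)
    set g : ℕ → ℝ := fun j => u (Function.update k i0 (j:ℤ)) with hg
    have h0 : g 0 = 0 := by
      apply hbd
      exact ⟨i0, Or.inl (by simp)⟩
    have hmg : g m = u k := by
      rw [hg]
      simp only
      rw [hmc, Function.update_eq_self]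
    have tele : u k = ∑ j ∈ Finset.range m, (g (j + 1) - g j) := by
      rw [Finset.sum_range_sub g m, h0, hmg, sub_zero]
    have cast1 : ((m:ℕ) : ℝ) ≤ (N : ℝ) - 1 := by
      have : (m : ℤ) ≤ (N : ℤ) - 1 := by omega
      have h2 : ((m:ℝ)) + 1 ≤ (N:ℝ) := by exact_mod_cast (by omega : (m:ℤ) + 1 ≤ (N:ℤ))
      linarith
    calc u k ^ 2 = (∑ j ∈ Finset.range m, (g (j + 1) - g j)) ^ 2 := by rw [← tele]
      _ ≤ (Finset.range m).card * ∑ j ∈ Finset.range m, (g (j + 1) - g j) ^ 2 :=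
          sq_sum_le_card_mul_sum_sq
      _ ≤ ((N:ℝ) - 1) * ∑ j ∈ Finset.range N, (g (j + 1) - g j) ^ 2 := by
          apply mul_le_mul
          · rw [Finset.card_range]; exact cast1
          · apply Finset.sum_le_sum_of_subset_of_nonneg
            · apply Finset.range_subset_range.2; omega
            · intro _ _ _; exact sq_nonneg _
          · exact Finset.sum_nonneg fun _ _ => sq_nonneg _
          · linarith
      _ = ((N:ℝ) - 1) * ∑ j ∈ Finset.range N,
            (u (Function.update k i0 ((j:ℤ) + 1)) - u (Function.update k i0 (j:ℤ))) ^ 2 := by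
          congr 1
  have step1 : ∑ k ∈ Bint, u k ^ 2 ≤ ∑ k ∈ Bint, ((N:ℝ) - 1) * ∑ j ∈ Finset.range N,
      (u (Function.update k i0 ((j:ℤ) + 1)) - u (Function.update k i0 (j:ℤ))) ^ 2 :=
    Finset.sum_le_sum point
  have step2 : ∑ k ∈ Bint, ((N:ℝ) - 1) * ∑ j ∈ Finset.range N,
        (u (Function.update k i0 ((j:ℤ) + 1)) - u (Function.update k i0 (j:ℤ))) ^ 2
      = ((N:ℝ) - 1) * ∑ p ∈ Bint ×ˢ Finset.range N,
          (u (Function.update p.1 i0 ((p.2:ℤ)) + Pi.single i0 1)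
            - u (Function.update p.1 i0 (p.2:ℤ))) ^ 2 := by
    rw [← Finset.mul_sum, Finset.sum_product]
    congr 1
    apply Finset.sum_congr rfl
    intro k _
    apply Finset.sum_congr rfl
    intro j _
    rw [update_add_single']
  have step3 : ∑ p ∈ Bint ×ˢ Finset.range N,
        (u (Function.update p.1 i0 ((p.2:ℤ)) + Pi.single i0 1)
          - u (Function.update p.1 i0 (p.2:ℤ))) ^ 2
      = ∑ p ∈ D ×ˢ Finset.Icc (1:ℤ) ((N:ℤ) - 1),
          (u (p.1 + Pi.single i0 1) - u p.1) ^ 2 := by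
    apply Finset.sum_nbij' (i := fun p => (Function.update p.1 i0 ((p.2 : ℕ) : ℤ), p.1 i0))
      (j := fun p => (Function.update p.1 i0 p.2, (p.1 i0).toNat))
    · rintro ⟨k, j⟩ hp
      dsimp only
      rw [Finset.mem_product] at hp ⊢
      dsimp only at hp ⊢
      obtain ⟨hk, hj⟩ := hp
      rw [hB, Fintype.mem_piFinset] at hk
      simp only [Finset.mem_Icc] at hk
      rw [Finset.mem_range] at hj
      constructor
      · rw [hDdef, Fintype.mem_piFinset]
        intro l
        by_cases hl : l = i0
        · subst hl
          rw [if_pos rfl, Function.update_self, Finset.mem_Icc]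
          omega
        · rw [if_neg hl, Function.update_of_ne hl, Finset.mem_Icc]
          exact hk l
      · rw [Finset.mem_Icc]; exact hk i0
    · rintro ⟨k, t⟩ hp
      dsimp only
      rw [Finset.mem_product] at hp ⊢
      dsimp only at hp ⊢
      obtain ⟨hk, ht⟩ := hp
      rw [hDdef, Fintype.mem_piFinset] at hk
      rw [Finset.mem_Icc] at ht
      have hki0 := hk i0
      rw [if_pos rfl, Finset.mem_Icc] at hki0
      constructor
      · rw [hB, Fintype.mem_piFinset]
        intro l
        by_cases hl : l = i0
        · subst hl
          rw [Function.update_self, Finset.mem_Icc]; exact ht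
        · have := hk l
          rw [if_neg hl] at this
          rwa [Function.update_of_ne hl]
      · rw [Finset.mem_range]; omega
    · rintro ⟨k, j⟩ hp
      dsimp only
      rw [Finset.mem_product] at hp
      ext
      · simp [Function.update_idem, Function.update_self, Function.update_eq_self]
      · simp [Function.update_self]
    · rintro ⟨k, t⟩ hp
      dsimp only
      rw [Finset.mem_product] at hp
      obtain ⟨hk, ht⟩ := hp
      rw [hDdef, Fintype.mem_piFinset] at hk
      have hki0 := hk i0
      rw [if_pos rfl, Finset.mem_Icc] at hki0
      have : (((k i0).toNat : ℕ) : ℤ) = k i0 := Int.toNat_of_nonneg hki0.1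
      ext
      · simp [Function.update_idem, this, Function.update_eq_self]
      · simp [Function.update_self]
    · rintro ⟨k, j⟩ _
      rfl
  have step4 : ∑ p ∈ D ×ˢ Finset.Icc (1:ℤ) ((N:ℤ) - 1),
        (u (p.1 + Pi.single i0 1) - u p.1) ^ 2
      = ((N:ℝ) - 1) * ∑ k ∈ D, (u (k + Pi.single i0 1) - u k) ^ 2 := by
    rw [Finset.sum_product]
    rw [Finset.mul_sum]
    apply Finset.sum_congr rfl
    intro k _
    dsimp only
    rw [Finset.sum_const, Int.card_Icc, nsmul_eq_mul]
    congr 1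
    have : ((N:ℤ) - 1 + 1 - 1).toNat = N - 1 := by omega
    rw [this]
    have : ((N - 1 : ℕ) : ℝ) = (N : ℝ) - 1 := by
      push_cast [hN]
      ring
    rw [this]
  have hSnn : 0 ≤ ∑ k ∈ D, (u (k + Pi.single i0 1) - u k) ^ 2 :=
    Finset.sum_nonneg fun _ _ => sq_nonneg _
  have hN1 : (1:ℝ) ≤ (N:ℝ) := by exact_mod_cast hN
  calc ∑ k ∈ Bint, u k ^ 2
      ≤ ((N:ℝ) - 1) * (((N:ℝ) - 1) * ∑ k ∈ D, (u (k + Pi.single i0 1) - u k) ^ 2) := by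
        rw [← step4, ← step3, ← step2]; exact step1
    _ ≤ (N:ℝ) ^ 2 * ∑ k ∈ D, (u (k + Pi.single i0 1) - u k) ^ 2 := by
        rw [← mul_assoc]
        apply mul_le_mul_of_nonneg_right _ hSnn
        nlinarith
end

section
/- Let $d \ge 1$, $h > 0$, and let $u, v : \mathbb{Z}^d \to \mathbb{R}$ be finitely supported, with hat interpolants $\Phi u, \Phi v$ defined by $\Phi u(x) = \sum_k u_k \prod_i \chi(x_i/h - k_i)$, $\chi(t) = \max(0,1-|t|)$. The interpolants are Lipschitz, hence almost everywhere differentiable, and $\Big| \sum_{i=1}^d \int_{\mathbb{R}^d} \partial_i(\Phi v)(x)\, \partial_i(\Phi u)(x)\, dx \Big| \;\le\; h^d \, q(v)^{1/2} q(u)^{1/2}$, where $q(u) = \sum_{i=1}^d \sum_{k \in \mathbb{Z}^d} \big( (u_{k+e_i} - u_k)/h \big)^2$ is the discrete Dirichlet energy. -/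
/-
Away from the hyperplanes `x_j ∈ hℤ`, the `i`-th partial derivative of the tensor-product hat
function `φ_k` is `(ψ_{k-e_i} - ψ_k) / h`, where `ψ_k` is `φ_k` with its `i`-th factor replaced by
the indicator of the cell `(k_i, k_i + 1)`. Summation by parts turns `∂_i Φu` into
`∑_k D_i u(k) ψ_k`, with `D_i u` the forward difference quotient. The `ψ_k` are nonnegative, have
integral `h^d` and sum to at most `1` at every point, so the pointwise Cauchy–Schwarz inequality
gives `‖∑_k a_k ψ_k‖²_{L²} ≤ h^d ∑_k a_k²`. Cauchy–Schwarz in `L²` for each `i`, and then in the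
sum over `i`, yields the estimate. The interpolants are Lipschitz as finite sums of products of
bounded Lipschitz functions, and Rademacher's theorem gives their a.e. differentiability.
-/

open BigOperators MeasureTheory

/-- The canonical hat function on `ℝ`, centered at `0` with support `[-1,1]`. -/
noncomputable def chi (t : ℝ) : ℝ := max 0 (1 - |t|)

open Finset

lemma sum_le_sum_of_eq_zero_off {κ : Type*} [DecidableEq κ] {f : κ → ℝ} (hf : ∀ n, 0 ≤ f n)
    {P : Finset κ} (hP : ∀ n ∉ P, f n = 0) (T : Finset κ) : ∑ n ∈ T, f n ≤ ∑ n ∈ P, f n :=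
  calc ∑ n ∈ T, f n ≤ ∑ n ∈ T ∪ P, f n :=
        sum_le_sum_of_subset_of_nonneg subset_union_left fun n _ _ => hf n
    _ = ∑ n ∈ P, f n :=
        (sum_subset subset_union_right fun n _ hn => hP n hn).symm

lemma sum_prod_le_one {ι κ : Type*} [Fintype ι] [DecidableEq ι] [DecidableEq κ]
    {f : ι → κ → ℝ} (hf : ∀ j n, 0 ≤ f j n) (hf₁ : ∀ j (T : Finset κ), ∑ n ∈ T, f j n ≤ 1)
    (S : Finset (ι → κ)) : ∑ k ∈ S, ∏ j, f j (k j) ≤ 1 :=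
  calc ∑ k ∈ S, ∏ j, f j (k j)
      ≤ ∑ k ∈ Fintype.piFinset fun j => S.image (· j), ∏ j, f j (k j) :=
        sum_le_sum_of_subset_of_nonneg
          (fun _ hk => Fintype.mem_piFinset.2 fun _ => mem_image_of_mem _ hk)
          fun k _ _ => prod_nonneg fun j _ => hf j (k j)
    _ = ∏ j, ∑ n ∈ S.image (· j), f j n := (prod_univ_sum _ _).symm
    _ ≤ 1 := prod_le_one (fun j _ => sum_nonneg fun n _ => hf j n) fun j _ => hf₁ j _

lemma prod_ite_eq_mul_prod_erase {ι : Type*} [Fintype ι] [DecidableEq ι] (i : ι)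
    (g c : ℝ → ℝ) (y : ι → ℝ) :
    ∏ j, (if j = i then g else c) (y j) = g (y i) * ∏ j ∈ univ.erase i, c (y j) := by
  rw [← mul_prod_erase univ _ (mem_univ i), if_pos rfl]
  exact congrArg _ (prod_congr rfl fun j hj => by rw [if_neg (ne_of_mem_erase hj)])

lemma finsum_mul_sub_shift {G : Type*} [AddCommGroup G] {u : G → ℝ} (hu : u.support.Finite)
    (E : G → ℝ) (e : G) :
    ∑ᶠ k, u k * (E (k - e) - E k) = ∑ᶠ k, fwdDiff e u k * E k := by
  have hshift : ∑ᶠ k, u k * E (k - e) = ∑ᶠ k, u (k + e) * E k := by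
    rw [← finsum_comp_equiv (Equiv.addRight e)]
    simp
  have hfin : ∀ F : G → ℝ, (fun k => u k * F k).support.Finite := fun F =>
    hu.subset (Function.support_mul_subset_left _ _)
  have hfin' : (fun k => u (k + e) * E k).support.Finite :=
    (hu.preimage (add_left_injective e).injOn).subset fun k hk =>
      Function.support_mul_subset_left _ _ hk
  simp only [mul_sub, fwdDiff, sub_mul]
  rw [finsum_sub_distrib (hfin _) (hfin _), finsum_sub_distrib hfin' (hfin _), hshift]

lemma finsum_mul_eq_sum {α : Type*} {c : α → ℝ} (hc : c.support.Finite) (F : α → ℝ) :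
    ∑ᶠ k, c k * F k = ∑ k ∈ hc.toFinset, c k * F k :=
  finsum_eq_sum_of_support_subset _ fun _ hk => hc.mem_toFinset.2 (left_ne_zero_of_mul hk)

lemma finite_support_fwdDiff_div {G : Type*} [AddCommGroup G] {u : G → ℝ}
    (hu : u.support.Finite) (e : G) (h : ℝ) : (fun k => fwdDiff e u k / h).support.Finite :=
  ((hu.preimage (add_left_injective e).injOn).union hu).subset fun k hk => by
    by_contra hk'
    simp only [Set.mem_union, Set.mem_preimage, Function.mem_support, not_or, not_not] at hk'
    simp [fwdDiff, hk'.1, hk'.2] at hk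

lemma LipschitzWith.mul_of_abs_le_one {X : Type*} [PseudoMetricSpace X] {f g : X → ℝ}
    {Kf Kg : NNReal} (hf : LipschitzWith Kf f) (hg : LipschitzWith Kg g)
    (hf₁ : ∀ x, |f x| ≤ 1) (hg₁ : ∀ x, |g x| ≤ 1) :
    LipschitzWith (Kf + Kg) fun x => f x * g x := by
  refine LipschitzWith.of_dist_le_mul fun x y => ?_
  have hfxy := hf.dist_le_mul x y
  have hgxy := hg.dist_le_mul x y
  simp only [Real.dist_eq, NNReal.coe_add] at *
  calc |f x * g x - f y * g y| = |(f x - f y) * g x + f y * (g x - g y)| := by ring_nf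
    _ ≤ |f x - f y| * |g x| + |f y| * |g x - g y| := by
        rw [← abs_mul, ← abs_mul]; exact abs_add_le _ _
    _ ≤ |f x - f y| * 1 + 1 * |g x - g y| := by gcongr; exacts [hg₁ x, hf₁ y]
    _ ≤ (Kf + Kg) * dist x y := by linarith

lemma lipschitzWith_prod {X ι : Type*} [PseudoMetricSpace X] (s : Finset ι) {F : ι → X → ℝ}
    {K : ι → NNReal} (hF : ∀ j, LipschitzWith (K j) (F j)) (hF₁ : ∀ j x, |F j x| ≤ 1) :
    LipschitzWith (∑ j ∈ s, K j) fun x => ∏ j ∈ s, F j x := by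
  classical
  induction s using Finset.induction with
  | empty => simp
  | insert a s ha ih =>
    simp only [prod_insert ha, sum_insert ha]
    exact (hF a).mul_of_abs_le_one ih (hF₁ a) fun x => by
      rw [abs_prod]; exact prod_le_one (fun _ _ => abs_nonneg _) fun j _ => hF₁ j x

lemma lipschitzWith_sum {X E ι : Type*} [PseudoMetricSpace X] [SeminormedAddCommGroup E]
    (s : Finset ι) {F : ι → X → E} {K : ι → NNReal} (hF : ∀ j, LipschitzWith (K j) (F j)) :
    LipschitzWith (∑ j ∈ s, K j) fun x => ∑ j ∈ s, F j x := by
  classical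
  induction s using Finset.induction with
  | empty => simpa using LipschitzWith.const (0 : E)
  | insert a s ha ih =>
    simp only [sum_insert ha]
    exact (hF a).add ih

lemma differentiableAt_prod {ι : Type*} [Fintype ι] {f : ι → ℝ → ℝ} {x : ι → ℝ}
    (hf : ∀ j, DifferentiableAt ℝ (f j) (x j)) :
    DifferentiableAt ℝ (fun y : ι → ℝ => ∏ j, f j (y j)) x := by
  classical
  exact (HasFDerivAt.finsetProd (u := univ) (g := fun j (y : ι → ℝ) => f j (y j)) fun j _ =>
      ((hf j).comp x (differentiableAt_apply (𝕜 := ℝ) j x)).hasFDerivAt).differentiableAt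

lemma fderiv_prod_apply_single {ι : Type*} [Fintype ι] [DecidableEq ι] {f : ι → ℝ → ℝ}
    {x : ι → ℝ} (hf : ∀ j, DifferentiableAt ℝ (f j) (x j)) (i : ι) :
    fderiv ℝ (fun y => ∏ j, f j (y j)) x (Pi.single i 1)
      = deriv (f i) (x i) * ∏ j ∈ univ.erase i, f j (x j) := by
  have hline : (fun t : ℝ => ∏ j, f j ((x + t • Pi.single i (1 : ℝ) : ι → ℝ) j))
      = fun t => f i (x i + t) * ∏ j ∈ univ.erase i, f j (x j) := by
    funext t
    rw [← mul_prod_erase univ _ (mem_univ i)]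
    congr 1
    · simp
    · exact prod_congr rfl fun j hj => by simp [ne_of_mem_erase hj]
  have hderiv : HasDerivAt (fun t : ℝ => f i (x i + t)) (deriv (f i) (x i)) 0 :=
    HasDerivAt.comp_const_add (x i) 0 (by rw [add_zero]; exact (hf i).hasDerivAt)
  have hline' : HasDerivAt (fun t : ℝ => ∏ j, f j ((x + t • Pi.single i (1 : ℝ) : ι → ℝ) j))
      (fderiv ℝ (fun y => ∏ j, f j (y j)) x (Pi.single i 1)) 0 :=
    (differentiableAt_prod hf).hasFDerivAt.hasLineDerivAt _
  rw [hline] at hline'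
  exact hline'.unique (hderiv.mul_const _)

lemma abs_integral_mul_le_sqrt_mul_sqrt {α : Type*} [MeasurableSpace α] {μ : Measure α}
    {f g : α → ℝ} (hf : MemLp f 2 μ) (hg : MemLp g 2 μ) :
    |∫ x, f x * g x ∂μ| ≤ √(∫ x, f x ^ 2 ∂μ) * √(∫ x, g x ^ 2 ∂μ) := by
  have hHolder := integral_mul_le_Lp_mul_Lq_of_nonneg Real.HolderConjugate.two_two
    (Filter.Eventually.of_forall fun x => abs_nonneg (f x))
    (Filter.Eventually.of_forall fun x => abs_nonneg (g x))
    (by rw [ENNReal.ofReal_ofNat]; exact hf.abs) (by rw [ENNReal.ofReal_ofNat]; exact hg.abs)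
  simp only [Real.rpow_two, sq_abs, ← Real.sqrt_eq_rpow] at hHolder
  calc |∫ x, f x * g x ∂μ| ≤ ∫ x, |f x * g x| ∂μ := abs_integral_le_integral_abs
    _ = ∫ x, |f x| * |g x| ∂μ := by simp only [abs_mul]
    _ ≤ _ := hHolder

lemma memLp_sum_mul_and_integral_sq_le {α ι : Type*} [MeasurableSpace α] {μ : Measure α}
    (S : Finset ι) (a : ι → ℝ) {ψ : ι → α → ℝ} (hψ : ∀ k x, 0 ≤ ψ k x)
    (hψ₁ : ∀ x, ∑ k ∈ S, ψ k x ≤ 1) (hψi : ∀ k, Integrable (ψ k) μ) :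
    MemLp (fun x => ∑ k ∈ S, a k * ψ k x) 2 μ ∧
      ∫ x, (∑ k ∈ S, a k * ψ k x) ^ 2 ∂μ ≤ ∑ k ∈ S, a k ^ 2 * ∫ x, ψ k x ∂μ := by
  have hsq : ∀ x, (∑ k ∈ S, a k * ψ k x) ^ 2 ≤ ∑ k ∈ S, a k ^ 2 * ψ k x := fun x =>
    calc (∑ k ∈ S, a k * ψ k x) ^ 2 ≤ (∑ k ∈ S, ψ k x) * ∑ k ∈ S, a k ^ 2 * ψ k x :=
          sum_sq_le_sum_mul_sum_of_sq_le_mul S (fun k _ => hψ k x)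
            (fun k _ => mul_nonneg (sq_nonneg _) (hψ k x)) fun k _ => le_of_eq (by ring)
      _ ≤ ∑ k ∈ S, a k ^ 2 * ψ k x :=
          mul_le_of_le_one_left (sum_nonneg fun k _ => mul_nonneg (sq_nonneg _) (hψ k x)) (hψ₁ x)
  have hdom : Integrable (fun x => ∑ k ∈ S, a k ^ 2 * ψ k x) μ :=
    integrable_finsetSum _ fun k _ => (hψi k).const_mul _
  have hmeas : AEStronglyMeasurable (fun x => ∑ k ∈ S, a k * ψ k x) μ :=
    (integrable_finsetSum _ fun k _ => (hψi k).const_mul (a k)).aestronglyMeasurable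
  refine ⟨(memLp_two_iff_integrable_sq hmeas).2 (hdom.mono' (hmeas.pow 2) ?_), ?_⟩
  · exact Filter.Eventually.of_forall fun x => by
      rw [Real.norm_of_nonneg (sq_nonneg _)]; exact hsq x
  · calc ∫ x, (∑ k ∈ S, a k * ψ k x) ^ 2 ∂μ ≤ ∫ x, ∑ k ∈ S, a k ^ 2 * ψ k x ∂μ :=
          integral_mono_of_nonneg (Filter.Eventually.of_forall fun x => sq_nonneg _) hdom
            (Filter.Eventually.of_forall hsq)
      _ = ∑ k ∈ S, a k ^ 2 * ∫ x, ψ k x ∂μ := by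
          rw [integral_finsetSum _ fun k _ => (hψi k).const_mul _]
          simp only [integral_const_mul]

lemma abs_integral_sum_mul_sum_le {α ι : Type*} [MeasurableSpace α] {μ : Measure α}
    {ψ : ι → α → ℝ} (hψ : ∀ k x, 0 ≤ ψ k x) (hψ₁ : ∀ (S : Finset ι) x, ∑ k ∈ S, ψ k x ≤ 1)
    (hψi : ∀ k, Integrable (ψ k) μ) {V : ℝ} (hV : ∀ k, ∫ x, ψ k x ∂μ ≤ V) (hV₀ : 0 ≤ V)
    (S T : Finset ι) (a b : ι → ℝ) :
    |∫ x, (∑ k ∈ S, a k * ψ k x) * (∑ k ∈ T, b k * ψ k x) ∂μ|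
      ≤ V * √(∑ k ∈ S, a k ^ 2) * √(∑ k ∈ T, b k ^ 2) := by
  have hbound : ∀ (S : Finset ι) (a : ι → ℝ), MemLp (fun x => ∑ k ∈ S, a k * ψ k x) 2 μ ∧
      √(∫ x, (∑ k ∈ S, a k * ψ k x) ^ 2 ∂μ) ≤ √V * √(∑ k ∈ S, a k ^ 2) := fun S a => by
    obtain ⟨hmem, hint⟩ := memLp_sum_mul_and_integral_sq_le S a hψ (hψ₁ S) hψi
    refine ⟨hmem, ?_⟩
    rw [← Real.sqrt_mul hV₀]
    refine Real.sqrt_le_sqrt (hint.trans ?_)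
    rw [mul_sum]
    exact sum_le_sum fun k _ => by
      rw [mul_comm V]; exact mul_le_mul_of_nonneg_left (hV k) (sq_nonneg _)
  obtain ⟨hfS, hIS⟩ := hbound S a
  obtain ⟨hfT, hIT⟩ := hbound T b
  calc _ ≤ √(∫ x, (∑ k ∈ S, a k * ψ k x) ^ 2 ∂μ) * √(∫ x, (∑ k ∈ T, b k * ψ k x) ^ 2 ∂μ) :=
        abs_integral_mul_le_sqrt_mul_sqrt hfS hfT
    _ ≤ (√V * √(∑ k ∈ S, a k ^ 2)) * (√V * √(∑ k ∈ T, b k ^ 2)) :=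
        mul_le_mul hIS hIT (Real.sqrt_nonneg _) (by positivity)
    _ = V * √(∑ k ∈ S, a k ^ 2) * √(∑ k ∈ T, b k ^ 2) := by
        rw [mul_mul_mul_comm, Real.mul_self_sqrt hV₀, mul_assoc]

lemma integrable_comp_div_sub {f : ℝ → ℝ} (hf : Integrable f) {h : ℝ} (hh : h ≠ 0) (c : ℝ) :
    Integrable fun s => f (s / h - c) :=
  (hf.comp_sub_right c).comp_div hh

lemma integral_comp_div_sub (f : ℝ → ℝ) {h : ℝ} (hh : 0 < h) (c : ℝ) :
    ∫ s, f (s / h - c) = h * ∫ t, f t := by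
  rw [Measure.integral_comp_div (fun s => f (s - c)) h, integral_sub_right_eq_self,
    abs_of_pos hh, smul_eq_mul]

noncomputable def cellIndicator (t : ℝ) : ℝ := (Set.Ioo (0 : ℝ) 1).indicator 1 t

noncomputable def chiDeriv (t : ℝ) : ℝ := cellIndicator (t + 1) - cellIndicator t

lemma chi_nonneg (t : ℝ) : 0 ≤ chi t := le_max_left _ _

lemma abs_chi_le_one (t : ℝ) : |chi t| ≤ 1 := by
  rw [abs_of_nonneg (chi_nonneg t)]
  exact max_le zero_le_one (by linarith [abs_nonneg t])

lemma chi_eq_zero_of_one_le_abs {t : ℝ} (ht : 1 ≤ |t|) : chi t = 0 :=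
  max_eq_left (by linarith)

lemma chi_of_abs_le_one {t : ℝ} (ht : |t| ≤ 1) : chi t = 1 - |t| :=
  max_eq_right (by linarith)

lemma lipschitzWith_chi : LipschitzWith 1 chi := by
  have h := ((LipschitzWith.const (1 : ℝ)).sub (lipschitzWith_one_norm (E := ℝ))).const_max 0
  simp only [zero_add, Real.norm_eq_abs] at h
  exact h

lemma continuous_chi : Continuous chi := lipschitzWith_chi.continuous

lemma hasCompactSupport_chi : HasCompactSupport chi :=
  HasCompactSupport.intro (isCompact_closedBall 0 1) fun t ht =>
    chi_eq_zero_of_one_le_abs <| by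
      rw [Metric.mem_closedBall, dist_zero_right, Real.norm_eq_abs, not_le] at ht; exact ht.le

lemma integrable_chi : Integrable chi :=
  continuous_chi.integrable_of_hasCompactSupport hasCompactSupport_chi

lemma integral_chi : ∫ t, chi t = 1 := by
  change ∫ t, max 0 (1 - |t|) = 1
  rw [integral_comp_abs (f := fun s => max 0 (1 - s))]
  have hcut : ∫ s in Set.Ioi (0 : ℝ), max 0 (1 - s) = ∫ s in Set.Ioc (0 : ℝ) 1, (1 - s) := by
    rw [setIntegral_eq_of_subset_of_forall_sdiff_eq_zero measurableSet_Ioi Set.Ioc_subset_Ioi_self]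
    · refine setIntegral_congr_fun measurableSet_Ioc fun s hs => max_eq_right ?_
      linarith [hs.2]
    · intro s hs
      exact max_eq_left (by linarith [not_le.mp fun h => hs.2 ⟨hs.1, h⟩])
  rw [hcut, ← intervalIntegral.integral_of_le zero_le_one, intervalIntegral.integral_comp_sub_left
    (fun s => s)]
  norm_num [integral_id]

lemma hasDerivAt_chi {t : ℝ} (ht : ∀ n : ℤ, t ≠ n) : HasDerivAt chi (chiDeriv t) t := by
  have h0 : t ≠ 0 := by exact_mod_cast ht 0
  have h1 : t ≠ 1 := by exact_mod_cast ht 1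
  have hm1 : t ≠ -1 := by exact_mod_cast ht (-1)
  have hlocal (c : ℝ) (hc : chiDeriv t = c) (g : ℝ → ℝ) (hg : HasDerivAt g c t)
      (hchi : chi =ᶠ[nhds t] g) : HasDerivAt chi (chiDeriv t) t :=
    hc ▸ hg.congr_of_eventuallyEq hchi
  simp only [chiDeriv, cellIndicator, Set.indicator_apply, Set.mem_Ioo, Pi.one_apply] at hlocal ⊢
  rcases lt_or_gt_of_ne hm1 with hlt | hgt
  · refine hlocal 0 (by split_ifs <;> grind) _ (hasDerivAt_const t 0) ?_
    filter_upwards [Iio_mem_nhds hlt] with s hs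
    exact chi_eq_zero_of_one_le_abs (le_abs.2 (Or.inr (by linarith [hs.out])))
  rcases lt_or_gt_of_ne h0 with hneg | hpos
  · refine hlocal 1 (by split_ifs <;> grind) _ ((hasDerivAt_id t).const_add 1) ?_
    filter_upwards [Ioo_mem_nhds hgt hneg] with s hs
    rw [chi_of_abs_le_one (abs_le.2 ⟨hs.1.le, by linarith [hs.2]⟩), abs_of_neg hs.2]
    simp
  rcases lt_or_gt_of_ne h1 with hlt | hgt
  · refine hlocal (-1) (by split_ifs <;> grind) _ ((hasDerivAt_id t).const_sub 1) ?_
    filter_upwards [Ioo_mem_nhds hpos hlt] with s hs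
    rw [chi_of_abs_le_one (abs_le.2 ⟨by linarith [hs.1], hs.2.le⟩), abs_of_pos hs.1]
    simp
  · refine hlocal 0 (by split_ifs <;> grind) _ (hasDerivAt_const t 0) ?_
    filter_upwards [Ioi_mem_nhds hgt] with s hs
    exact chi_eq_zero_of_one_le_abs (le_abs.2 (Or.inl (by linarith [hs.out])))

lemma sum_chi_sub_le_one (t : ℝ) (T : Finset ℤ) : ∑ n ∈ T, chi (t - n) ≤ 1 := by
  have hfl := Int.floor_le t
  have hlt := Int.lt_floor_add_one t
  have hoff : ∀ n ∉ ({⌊t⌋, ⌊t⌋ + 1} : Finset ℤ), chi (t - n) = 0 := fun n hn => by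
    simp only [mem_insert, mem_singleton, not_or] at hn
    apply chi_eq_zero_of_one_le_abs
    rcases (by omega : n + 1 ≤ ⌊t⌋ ∨ ⌊t⌋ + 2 ≤ n) with hn' | hn'
    · have : (n : ℝ) + 1 ≤ ⌊t⌋ := by exact_mod_cast hn'
      exact le_abs.2 (Or.inl (by linarith))
    · have : (⌊t⌋ : ℝ) + 2 ≤ n := by exact_mod_cast hn'
      exact le_abs.2 (Or.inr (by linarith))
  calc ∑ n ∈ T, chi (t - n) ≤ ∑ n ∈ {⌊t⌋, ⌊t⌋ + 1}, chi (t - n) :=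
        sum_le_sum_of_eq_zero_off (fun _ => chi_nonneg _) hoff T
    _ = 1 := by
        rw [sum_pair (by omega), chi_of_abs_le_one (abs_le.2 ⟨by linarith, by linarith⟩),
          chi_of_abs_le_one (abs_le.2 ⟨by push_cast; linarith, by push_cast; linarith⟩)]
        push_cast
        rw [abs_of_nonneg (by linarith), abs_of_nonpos (by linarith)]
        ring

lemma cellIndicator_nonneg (t : ℝ) : 0 ≤ cellIndicator t :=
  Set.indicator_nonneg (fun _ _ => zero_le_one) t

lemma cellIndicator_le_one (t : ℝ) : cellIndicator t ≤ 1 :=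
  Set.indicator_le_self' (fun _ _ => zero_le_one) t

lemma integrable_cellIndicator : Integrable cellIndicator :=
  (integrable_indicator_iff measurableSet_Ioo).2 (integrableOn_const (by simp))

lemma integral_cellIndicator : ∫ t, cellIndicator t = 1 := by
  simp [cellIndicator, integral_indicator measurableSet_Ioo]

lemma sum_cellIndicator_sub_le_one (t : ℝ) (T : Finset ℤ) :
    ∑ n ∈ T, cellIndicator (t - n) ≤ 1 :=
  calc ∑ n ∈ T, cellIndicator (t - n) ≤ ∑ n ∈ {⌊t⌋}, cellIndicator (t - n) :=
        sum_le_sum_of_eq_zero_off (fun _ => cellIndicator_nonneg _) (fun n hn =>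
          Set.indicator_of_notMem (fun hmem => hn (mem_singleton.2 (Int.floor_eq_iff.2
            ⟨by linarith [hmem.1], by linarith [hmem.2]⟩).symm)) _) T
    _ ≤ 1 := by rw [sum_singleton]; exact cellIndicator_le_one _

section Grid

variable {d : ℕ}

noncomputable def hatBasis (h : ℝ) (k : Fin d → ℤ) (x : Fin d → ℝ) : ℝ :=
  ∏ j, chi (x j / h - k j)

noncomputable def edgeBasis (h : ℝ) (i : Fin d) (k : Fin d → ℤ) (x : Fin d → ℝ) : ℝ :=
  ∏ j, (if j = i then cellIndicator else chi) (x j / h - k j)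

noncomputable def hatInterp (h : ℝ) (u : (Fin d → ℤ) → ℝ) (x : Fin d → ℝ) : ℝ :=
  ∑ᶠ k, u k * hatBasis h k x

lemma hatInterp_eq_sum (h : ℝ) {u : (Fin d → ℤ) → ℝ} (hu : u.support.Finite) :
    hatInterp h u = fun x => ∑ k ∈ hu.toFinset, u k * hatBasis h k x :=
  funext fun x => finsum_mul_eq_sum hu fun k => hatBasis h k x

lemma lipschitzWith_coord_div_sub (h : ℝ) (j : Fin d) (c : ℝ) :
    LipschitzWith ‖h⁻¹‖₊ fun x : Fin d → ℝ => x j / h - c :=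
  LipschitzWith.of_dist_le_mul fun x y => by
    rw [Real.dist_eq, sub_sub_sub_cancel_right, ← sub_div, abs_div, div_eq_inv_mul, coe_nnnorm,
      norm_inv, Real.norm_eq_abs]
    exact mul_le_mul_of_nonneg_left (by simpa [Real.dist_eq] using dist_le_pi_dist x y j)
      (inv_nonneg.2 (abs_nonneg h))

lemma lipschitzWith_hatBasis (h : ℝ) (k : Fin d → ℤ) :
    LipschitzWith (d * ‖h⁻¹‖₊) (hatBasis h k) := by
  have := lipschitzWith_prod univ (K := fun _ => ‖h⁻¹‖₊)
    (fun j => one_mul ‖h⁻¹‖₊ ▸ lipschitzWith_chi.comp (lipschitzWith_coord_div_sub h j (k j)))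
    fun _ _ => abs_chi_le_one _
  rwa [sum_const, card_univ, Fintype.card_fin, nsmul_eq_mul] at this

lemma lipschitzWith_hatInterp (h : ℝ) {u : (Fin d → ℤ) → ℝ} (hu : u.support.Finite) :
    LipschitzWith (∑ k ∈ hu.toFinset, ‖u k‖₊ * (d * ‖h⁻¹‖₊)) (hatInterp h u) := by
  rw [hatInterp_eq_sum h hu]
  exact lipschitzWith_sum _ fun k => (lipschitzWith_smul (u k)).comp (lipschitzWith_hatBasis h k)

lemma ae_forall_ne_int_mul (h : ℝ) : ∀ᵐ x : Fin d → ℝ, ∀ j (n : ℤ), x j ≠ n * h := by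
  simp only [ae_all_iff]
  intro j n
  simpa [← volume_pi] using Measure.ae_eval_ne (fun _ : Fin d => (volume : Measure ℝ)) j (n * h)

lemma hasDerivAt_chi_div_sub {h : ℝ} (hh : h ≠ 0) (c : ℤ) {s : ℝ} (hs : ∀ n : ℤ, s ≠ n * h) :
    HasDerivAt (fun s => chi (s / h - c)) (chiDeriv (s / h - c) / h) s := by
  have hnot : ∀ n : ℤ, s / h - c ≠ n := fun n hn => hs (n + c) <| by
    push_cast; field_simp at hn; linarith
  exact ((hasDerivAt_chi hnot).comp s (((hasDerivAt_id' s).div_const h).sub_const (c : ℝ)))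
    |>.congr_deriv (mul_one_div _ _)

lemma differentiableAt_hatBasis {h : ℝ} (hh : h ≠ 0) (k : Fin d → ℤ) {x : Fin d → ℝ}
    (hx : ∀ j (n : ℤ), x j ≠ n * h) : DifferentiableAt ℝ (hatBasis h k) x :=
  differentiableAt_prod fun j => (hasDerivAt_chi_div_sub hh (k j) (hx j)).differentiableAt

lemma edgeBasis_eq (h : ℝ) (i : Fin d) (k : Fin d → ℤ) (x : Fin d → ℝ) :
    edgeBasis h i k x
      = cellIndicator (x i / h - k i) * ∏ j ∈ univ.erase i, chi (x j / h - k j) :=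
  prod_ite_eq_mul_prod_erase i _ _ _

lemma fderiv_hatBasis_apply_single {h : ℝ} (hh : h ≠ 0) (k : Fin d → ℤ) {x : Fin d → ℝ}
    (hx : ∀ j (n : ℤ), x j ≠ n * h) (i : Fin d) :
    fderiv ℝ (hatBasis h k) x (Pi.single i 1)
      = (edgeBasis h i (k - Pi.single i 1) x - edgeBasis h i k x) / h := by
  have hf : ∀ j, HasDerivAt (fun s => chi (s / h - k j)) (chiDeriv (x j / h - k j) / h) (x j) :=
    fun j => hasDerivAt_chi_div_sub hh (k j) (hx j)
  have hshift : ∏ j ∈ univ.erase i, chi (x j / h - ((k - Pi.single i 1 : Fin d → ℤ) j : ℤ))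
      = ∏ j ∈ univ.erase i, chi (x j / h - k j) :=
    prod_congr rfl fun j hj => by simp [ne_of_mem_erase hj]
  have hi : x i / h - ((k - Pi.single i 1 : Fin d → ℤ) i : ℤ) = x i / h - k i + 1 := by simp; ring
  rw [show hatBasis h k = fun y => ∏ j, (fun j s => chi (s / h - k j)) j (y j) from rfl,
    fderiv_prod_apply_single fun j => (hf j).differentiableAt, (hf i).deriv, edgeBasis_eq,
    edgeBasis_eq, hshift, hi, chiDeriv]
  ring

lemma fderiv_hatInterp_apply_single {h : ℝ} (hh : h ≠ 0) {u : (Fin d → ℤ) → ℝ}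
    (hu : u.support.Finite) {x : Fin d → ℝ} (hx : ∀ j (n : ℤ), x j ≠ n * h) (i : Fin d) :
    fderiv ℝ (hatInterp h u) x (Pi.single i 1)
      = ∑ᶠ k, fwdDiff (Pi.single i 1) u k / h * edgeBasis h i k x := by
  have hsum := HasFDerivAt.fun_sum (u := hu.toFinset) fun k _ =>
    (differentiableAt_hatBasis hh k hx).hasFDerivAt.const_mul (u k)
  rw [hatInterp_eq_sum h hu, hsum.fderiv]
  simp only [FunLike.coe_sum, Finset.sum_apply, FunLike.coe_smul,
    Pi.smul_apply, smul_eq_mul, fderiv_hatBasis_apply_single hh _ hx, sub_div]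
  rw [← finsum_mul_eq_sum hu, finsum_mul_sub_shift hu (fun k => edgeBasis h i k x / h)]
  exact finsum_congr fun k => by ring

lemma edgeBasis_nonneg (h : ℝ) (i : Fin d) (k : Fin d → ℤ) (x : Fin d → ℝ) :
    0 ≤ edgeBasis h i k x :=
  prod_nonneg fun j _ => by split_ifs; exacts [cellIndicator_nonneg _, chi_nonneg _]

lemma integrable_edgeBasis {h : ℝ} (hh : h ≠ 0) (i : Fin d) (k : Fin d → ℤ) :
    Integrable (edgeBasis h i k) :=
  Integrable.fintype_prod (f := fun j s => (if j = i then cellIndicator else chi) (s / h - k j))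
    fun j => integrable_comp_div_sub
      (by split_ifs; exacts [integrable_cellIndicator, integrable_chi]) hh _

lemma integral_edgeBasis {h : ℝ} (hh : 0 < h) (i : Fin d) (k : Fin d → ℤ) :
    ∫ x, edgeBasis h i k x = h ^ d := by
  simp only [edgeBasis]
  rw [integral_fintype_prod_volume_eq_prod
    (fun j s => (if j = i then cellIndicator else chi) (s / h - k j))]
  have hunit : ∀ j, ∫ t, (if j = i then cellIndicator else chi) t = 1 := fun j => by
    split_ifs
    exacts [integral_cellIndicator, integral_chi]
  simp [integral_comp_div_sub _ hh, hunit]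

lemma sum_edgeBasis_le_one (h : ℝ) (i : Fin d) (S : Finset (Fin d → ℤ)) (x : Fin d → ℝ) :
    ∑ k ∈ S, edgeBasis h i k x ≤ 1 :=
  sum_prod_le_one (f := fun j (n : ℤ) => (if j = i then cellIndicator else chi) (x j / h - n))
    (fun _ _ => by split_ifs; exacts [cellIndicator_nonneg _, chi_nonneg _])
    (fun _ T => by split_ifs; exacts [sum_cellIndicator_sub_le_one _ T, sum_chi_sub_le_one _ T]) S

lemma abs_integral_sum_edgeBasis_mul_le {h : ℝ} (hh : 0 < h) (i : Fin d)
    {a b : (Fin d → ℤ) → ℝ} (ha : a.support.Finite) (hb : b.support.Finite) :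
    |∫ x, (∑ᶠ k, a k * edgeBasis h i k x) * (∑ᶠ k, b k * edgeBasis h i k x)|
      ≤ h ^ d * √(∑ᶠ k, a k ^ 2) * √(∑ᶠ k, b k ^ 2) := by
  simp only [sq, finsum_mul_eq_sum ha, finsum_mul_eq_sum hb]
  simpa only [sq] using abs_integral_sum_mul_sum_le (edgeBasis_nonneg h i)
    (sum_edgeBasis_le_one h i) (integrable_edgeBasis hh.ne' i)
    (fun k => (integral_edgeBasis hh i k).le) (by positivity) _ _ _ _

lemma abs_integral_fderiv_hatInterp_mul_le {h : ℝ} (hh : 0 < h) {u v : (Fin d → ℤ) → ℝ}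
    (hu : u.support.Finite) (hv : v.support.Finite) (i : Fin d) :
    |∫ x, fderiv ℝ (hatInterp h v) x (Pi.single i 1) * fderiv ℝ (hatInterp h u) x (Pi.single i 1)|
      ≤ h ^ d * √(∑ᶠ k, (fwdDiff (Pi.single i 1) v k / h) ^ 2)
        * √(∑ᶠ k, (fwdDiff (Pi.single i 1) u k / h) ^ 2) := by
  rw [integral_congr_ae (Filter.EventuallyEq.symm ?_)]
  · exact abs_integral_sum_edgeBasis_mul_le hh i (finite_support_fwdDiff_div hv _ h)
      (finite_support_fwdDiff_div hu _ h)
  filter_upwards [ae_forall_ne_int_mul h] with x hx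
  rw [fderiv_hatInterp_apply_single hh.ne' hv hx, fderiv_hatInterp_apply_single hh.ne' hu hx]

end Grid

theorem stmt13_general (d : ℕ) (h : ℝ) (hh : 0 < h)
    (u v : (Fin d → ℤ) → ℝ)
    (hu : (Function.support u).Finite)
    (hv : (Function.support v).Finite)
    (Phiu Phiv : (Fin d → ℝ) → ℝ)
    (hPhiu : Phiu = fun x : Fin d → ℝ =>
        ∑ᶠ k : Fin d → ℤ, u k * ∏ i : Fin d, chi (x i / h - (k i : ℝ)))
    (hPhiv : Phiv = fun x : Fin d → ℝ =>
        ∑ᶠ k : Fin d → ℤ, v k * ∏ i : Fin d, chi (x i / h - (k i : ℝ))) :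
    (∃ C : NNReal, LipschitzWith C Phiu) ∧
    (∃ C : NNReal, LipschitzWith C Phiv) ∧
    (∀ᵐ x : Fin d → ℝ, DifferentiableAt ℝ Phiu x ∧ DifferentiableAt ℝ Phiv x) ∧
    |∑ i : Fin d, ∫ x : Fin d → ℝ,
        fderiv ℝ Phiv x (Pi.single i 1) * fderiv ℝ Phiu x (Pi.single i 1)|
      ≤ h ^ d *
        Real.sqrt (∑ i : Fin d, ∑ᶠ k : Fin d → ℤ,
          ((v (k + Pi.single i 1) - v k) / h) ^ 2) *
        Real.sqrt (∑ i : Fin d, ∑ᶠ k : Fin d → ℤ,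
          ((u (k + Pi.single i 1) - u k) / h) ^ 2) := by
  obtain rfl : Phiu = hatInterp h u := hPhiu
  obtain rfl : Phiv = hatInterp h v := hPhiv
  have hLu := lipschitzWith_hatInterp h hu
  have hLv := lipschitzWith_hatInterp h hv
  refine ⟨⟨_, hLu⟩, ⟨_, hLv⟩, hLu.ae_differentiableAt.and hLv.ae_differentiableAt, ?_⟩
  have hnonneg (w : (Fin d → ℤ) → ℝ) (i : Fin d) :
      0 ≤ ∑ᶠ k, (fwdDiff (Pi.single i 1) w k / h) ^ 2 := finsum_nonneg fun _ => sq_nonneg _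
  calc _ ≤ ∑ i : Fin d, |∫ x, fderiv ℝ (hatInterp h v) x (Pi.single i 1)
          * fderiv ℝ (hatInterp h u) x (Pi.single i 1)| := abs_sum_le_sum_abs _ _
    _ ≤ ∑ i : Fin d, h ^ d * (√(∑ᶠ k, (fwdDiff (Pi.single i 1) v k / h) ^ 2)
          * √(∑ᶠ k, (fwdDiff (Pi.single i 1) u k / h) ^ 2)) :=
        sum_le_sum fun i _ =>
          (abs_integral_fderiv_hatInterp_mul_le hh hu hv i).trans_eq (mul_assoc _ _ _)
    _ ≤ h ^ d * (√(∑ i : Fin d, ∑ᶠ k, (fwdDiff (Pi.single i 1) v k / h) ^ 2)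
          * √(∑ i : Fin d, ∑ᶠ k, (fwdDiff (Pi.single i 1) u k / h) ^ 2)) := by
        rw [← mul_sum]
        exact mul_le_mul_of_nonneg_left
          (Real.sum_sqrt_mul_sqrt_le _ (hnonneg v) (hnonneg u)) (by positivity)
    _ = _ := (mul_assoc _ _ _).symm

/-- The hat interpolants `Φu, Φv` of finitely supported grid
functions are Lipschitz, hence almost everywhere differentiable, and
`|∑ᵢ ∫ ∂ᵢ(Φv) ∂ᵢ(Φu)| ≤ h^d q(v)^{1/2} q(u)^{1/2}`, where
`q(u) = ∑ᵢ ∑_k ((u_{k+eᵢ} - u_k)/h)²` is the discrete Dirichlet energy. -/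
theorem stmt13 (d : ℕ) (hd : 1 ≤ d) (h : ℝ) (hh : 0 < h)
    (u v : (Fin d → ℤ) → ℝ)
    (hu : (Function.support u).Finite)
    (hv : (Function.support v).Finite)
    (Phiu Phiv : (Fin d → ℝ) → ℝ)
    (hPhiu : Phiu = fun x : Fin d → ℝ =>
        ∑ᶠ k : Fin d → ℤ, u k * ∏ i : Fin d, chi (x i / h - (k i : ℝ)))
    (hPhiv : Phiv = fun x : Fin d → ℝ =>
        ∑ᶠ k : Fin d → ℤ, v k * ∏ i : Fin d, chi (x i / h - (k i : ℝ))) :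
    (∃ C : NNReal, LipschitzWith C Phiu) ∧
    (∃ C : NNReal, LipschitzWith C Phiv) ∧
    (∀ᵐ x : Fin d → ℝ, DifferentiableAt ℝ Phiu x ∧ DifferentiableAt ℝ Phiv x) ∧
    |∑ i : Fin d, ∫ x : Fin d → ℝ,
        fderiv ℝ Phiv x (Pi.single i 1) * fderiv ℝ Phiu x (Pi.single i 1)|
      ≤ h ^ d *
        Real.sqrt (∑ i : Fin d, ∑ᶠ k : Fin d → ℤ,
          ((v (k + Pi.single i 1) - v k) / h) ^ 2) *
        Real.sqrt (∑ i : Fin d, ∑ᶠ k : Fin d → ℤ,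
          ((u (k + Pi.single i 1) - u k) / h) ^ 2) :=
  stmt13_general d h hh u v hu hv Phiu Phiv hPhiu hPhiv
end
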